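/- arXiv:1911.05010 — 4 statements merged into one kernel-verified Lean document; each statement's English description precedes it below -/
import Mathlib

section
/- Let Σ be a finite alphabet and let f : Σ* → ℝ be computed by a weighted finite automaton with k states, i.e. there exist α, ω ∈ ℝ^k and matrices A_σ ∈ ℝ^{k×k} for each σ ∈ Σ such that f(x₁x₂⋯xₙ) = αᵀ A_{x₁} A_{x₂} ⋯ A_{xₙ} ω for every word x₁⋯xₙ ∈ Σ*. Then the linear span, inside the space of real-valued functions on Σ*, of the family of functions {v ↦ f(uv) : u ∈ Σ*} (the rows of the Hankel matrix of f) is a finite-dimensional subspace of dimension at most k. -/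
open Matrix

/-- If `f : Σ* → ℝ` is computed by a weighted finite automaton with `k` states,
then the span of the rows of its Hankel matrix (the functions `v ↦ f (u ++ v)` for
`u ∈ Σ*`) is a subspace of dimension at most `k` (in particular, finite-dimensional). -/
theorem hankel_row_span_rank_le_of_wfa
    {Γ : Type} [Fintype Γ] (k : ℕ) (f : List Γ → ℝ)
    (α ω : Fin k → ℝ) (A : Γ → Matrix (Fin k) (Fin k) ℝ)
    (hf : ∀ x : List Γ, f x = α ⬝ᵥ ((x.map A).prod *ᵥ ω)) :
    Module.rank ℝ ↥(Submodule.span ℝ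
      (Set.range fun u : List Γ => fun v : List Γ => f (u ++ v))) ≤ k := by
  -- the linear map sending a state vector to its "future" function
  let g : (Fin k → ℝ) →ₗ[ℝ] (List Γ → ℝ) :=
    { toFun := fun x => fun v => x ⬝ᵥ ((v.map A).prod *ᵥ ω)
      map_add' := by
        intro x y; funext v; simp [add_dotProduct]
      map_smul' := by
        intro c x; funext v; simp [smul_dotProduct] }
  have hsub : Submodule.span ℝ
      (Set.range fun u : List Γ => fun v : List Γ => f (u ++ v)) ≤
      LinearMap.range g := by
    rw [Submodule.span_le]
    rintro _ ⟨u, rfl⟩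
    refine ⟨α ᵥ* (u.map A).prod, ?_⟩
    funext v
    show (α ᵥ* (u.map A).prod) ⬝ᵥ ((v.map A).prod *ᵥ ω) = f (u ++ v)
    rw [hf (u ++ v), List.map_append, List.prod_append]
    simp [dotProduct_mulVec, vecMul_vecMul, ← mulVec_mulVec]
  calc Module.rank ℝ ↥(Submodule.span ℝ
      (Set.range fun u : List Γ => fun v : List Γ => f (u ++ v)))
      ≤ Module.rank ℝ ↥(LinearMap.range g) := Submodule.rank_mono hsub
    _ ≤ Module.rank ℝ (Fin k → ℝ) := rank_range_le g
    _ = k := by simp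
end

section
/- (Theorem 1.) Let Σ be a finite alphabet and let f : Σ* → ℝ be a function that is computed by at least one weighted finite automaton. Then the rank of f, defined as the minimal number n such that some WFA with n states computes f, equals the dimension of the linear span of the rows of the Hankel matrix of f, i.e. of the family of functions {v ↦ f(uv) : u ∈ Σ*} inside the space of real-valued functions on Σ*. -/
/-!
If `f` is computed by an automaton with states `ι`, every Hankel row `v ↦ f (u ++ v)` is a
linear combination of the `|ι|` state functions `v ↦ (A_v ω) i`, so the row span has
dimension at most `|ι|`. Conversely, the row span `V` contains `f` and is invariant under the
left shifts `g ↦ (v ↦ g (a :: v))`; in a basis of `V`, the matrices of these shifts, the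
values of the basis vectors at the empty word and the coordinates of `f` form an automaton
with `dim V` states.
-/

open Matrix

namespace WeightedAutomaton

variable {K Γ : Type*} [Field K]

def hankelRow (f : List Γ → K) (u : List Γ) : List Γ → K := fun v => f (u ++ v)

def hankelSpan (f : List Γ → K) : Submodule K (List Γ → K) :=
  Submodule.span K (Set.range (hankelRow f))

section UpperBound

variable {ι : Type*} [Fintype ι] [DecidableEq ι] {f : List Γ → K} {α ω : ι → K}
  {A : Γ → Matrix ι ι K}

def stateFun (A : Γ → Matrix ι ι K) (ω : ι → K) (i : ι) : List Γ → K :=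
  fun v => ((v.map A).prod *ᵥ ω) i

theorem hankelRow_eq_sum (hf : ∀ x, f x = α ⬝ᵥ ((x.map A).prod *ᵥ ω)) (u : List Γ) :
    hankelRow f u = ∑ i, (α ᵥ* (u.map A).prod) i • stateFun A ω i := by
  funext v
  rw [hankelRow, hf, List.map_append, List.prod_append, ← mulVec_mulVec, dotProduct_mulVec]
  simp [dotProduct, stateFun, Finset.sum_apply]

theorem hankelSpan_le_span_range (hf : ∀ x, f x = α ⬝ᵥ ((x.map A).prod *ᵥ ω)) :
    hankelSpan f ≤ Submodule.span K (Set.range (stateFun A ω)) := by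
  rw [hankelSpan, Submodule.span_le]
  rintro _ ⟨u, rfl⟩
  rw [hankelRow_eq_sum hf]
  exact Submodule.sum_mem _ fun i _ => Submodule.smul_mem _ _ (Submodule.subset_span ⟨i, rfl⟩)

theorem finiteDimensional_hankelSpan (hf : ∀ x, f x = α ⬝ᵥ ((x.map A).prod *ᵥ ω)) :
    FiniteDimensional K (hankelSpan f) :=
  have := FiniteDimensional.span_of_finite K (Set.finite_range (stateFun A ω))
  Submodule.finiteDimensional_of_le (hankelSpan_le_span_range hf)

theorem finrank_hankelSpan_le_card (hf : ∀ x, f x = α ⬝ᵥ ((x.map A).prod *ᵥ ω)) :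
    Module.finrank K (hankelSpan f) ≤ Fintype.card ι :=
  have := FiniteDimensional.span_of_finite K (Set.finite_range (stateFun A ω))
  (Submodule.finrank_mono (hankelSpan_le_span_range hf)).trans (finrank_range_le_card _)

end UpperBound

theorem hankelSpan_le_comap_funLeft_cons (f : List Γ → K) (a : Γ) :
    hankelSpan f ≤ (hankelSpan f).comap (LinearMap.funLeft K K (List.cons a)) := by
  rw [hankelSpan, Submodule.span_le]
  rintro _ ⟨u, rfl⟩
  refine Submodule.subset_span ⟨u ++ [a], ?_⟩
  funext v
  simp [hankelRow]

theorem self_mem_hankelSpan (f : List Γ → K) : f ∈ hankelSpan f :=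
  Submodule.subset_span ⟨[], rfl⟩

section Realization

variable {ι : Type*} [Fintype ι] [DecidableEq ι] {V : Submodule K (List Γ → K)}
  (hV : ∀ a : Γ, V ≤ V.comap (LinearMap.funLeft K K (List.cons a))) (b : Module.Basis ι K V)

-- Transposed: the automaton acts on the initial vector as a row vector, `α ↦ α ᵥ* A a`.
noncomputable def shiftMatrix (a : Γ) : Matrix ι ι K :=
  (LinearMap.toMatrix b b ((LinearMap.funLeft K K (List.cons a)).restrict (hV a)))ᵀ

theorem apply_eq_repr_dotProduct (g : V) (x : List Γ) :
    (g : List Γ → K) x =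
      b.repr g ⬝ᵥ ((x.map (shiftMatrix hV b)).prod *ᵥ fun i => (b i : List Γ → K) []) := by
  induction x generalizing g with
  | nil =>
    have hsum := congrArg (fun h : V => (h : List Γ → K) []) (b.sum_repr g)
    simp only [Submodule.coe_sum, Submodule.coe_smul, Finset.sum_apply, Pi.smul_apply,
      smul_eq_mul] at hsum
    simpa [dotProduct] using hsum.symm
  | cons a x ih =>
    have hshift : (g : List Γ → K) (a :: x) =
        ((LinearMap.funLeft K K (List.cons a)).restrict (hV a) g : List Γ → K) x := rfl
    rw [hshift, ih, ← LinearMap.toMatrix_mulVec_repr b b, ← vecMul_transpose,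
      ← dotProduct_mulVec, List.map_cons, List.prod_cons, ← mulVec_mulVec, shiftMatrix]

end Realization

theorem exists_wfa_of_mem {V : Submodule K (List Γ → K)}
    (hV : ∀ a : Γ, V ≤ V.comap (LinearMap.funLeft K K (List.cons a)))
    [FiniteDimensional K V] {f : List Γ → K} (hf : f ∈ V) :
    ∃ (α ω : Fin (Module.finrank K V) → K)
      (A : Γ → Matrix (Fin (Module.finrank K V)) (Fin (Module.finrank K V)) K),
      ∀ x, f x = α ⬝ᵥ ((x.map A).prod *ᵥ ω) :=
  ⟨_, _, _, apply_eq_repr_dotProduct hV (Module.finBasis K V) ⟨f, hf⟩⟩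

end WeightedAutomaton

open WeightedAutomaton

theorem wfa_rank_eq_hankel_rank_general
    {Γ : Type} (f : List Γ → ℝ)
    (hf : ∃ (k : ℕ) (α ω : Fin k → ℝ) (A : Γ → Matrix (Fin k) (Fin k) ℝ),
      ∀ x : List Γ, f x = α ⬝ᵥ ((x.map A).prod *ᵥ ω)) :
    sInf {n : ℕ | ∃ (α ω : Fin n → ℝ) (A : Γ → Matrix (Fin n) (Fin n) ℝ),
        ∀ x : List Γ, f x = α ⬝ᵥ ((x.map A).prod *ᵥ ω)} =
      Module.finrank ℝ ↥(Submodule.span ℝ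
        (Set.range fun u : List Γ => fun v : List Γ => f (u ++ v))) := by
  obtain ⟨k, α, ω, A, hA⟩ := hf
  change _ = Module.finrank ℝ (hankelSpan f)
  have := finiteDimensional_hankelSpan hA
  refine le_antisymm (Nat.sInf_le ?_) (le_csInf ⟨k, α, ω, A, hA⟩ ?_)
  · exact exists_wfa_of_mem (hankelSpan_le_comap_funLeft_cons f) (self_mem_hankelSpan f)
  · rintro n ⟨β, η, B, hB⟩
    simpa using finrank_hankelSpan_le_card hB

/-- (Theorem 1.) For a function `f : Σ* → ℝ` computed by at least one weighted finite
automaton, the rank of `f` (the minimal number of states of a WFA computing `f`) equals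
the dimension of the span of the rows of the Hankel matrix of `f`, i.e. of the family of
functions `v ↦ f (u ++ v)` for `u ∈ Σ*`. -/
theorem wfa_rank_eq_hankel_rank
    {Γ : Type} [Fintype Γ] (f : List Γ → ℝ)
    (hf : ∃ (k : ℕ) (α ω : Fin k → ℝ) (A : Γ → Matrix (Fin k) (Fin k) ℝ),
      ∀ x : List Γ, f x = α ⬝ᵥ ((x.map A).prod *ᵥ ω)) :
    sInf {n : ℕ | ∃ (α ω : Fin n → ℝ) (A : Γ → Matrix (Fin n) (Fin n) ℝ),
        ∀ x : List Γ, f x = α ⬝ᵥ ((x.map A).prod *ᵥ ω)} =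
      Module.finrank ℝ ↥(Submodule.span ℝ
        (Set.range fun u : List Γ => fun v : List Γ => f (u ++ v))) :=
  wfa_rank_eq_hankel_rank_general f hf
end

section
/- (Spectral learning reconstruction.) Let Σ be a finite alphabet and let f : Σ* → ℝ be computed by some weighted finite automaton with k states. Let U, V ⊆ Σ* be finite sets of words, each containing the empty word λ, such that the Hankel block H ∈ ℝ^{U×V} with entries H_{u,v} = f(uv) has matrix rank exactly k (i.e. the basis (U,V) is complete for f). Suppose H = P·S is a rank factorization with P ∈ ℝ^{U×k} and S ∈ ℝ^{k×V}, and let P' ∈ ℝ^{k×U} and S' ∈ ℝ^{V×k} be any matrices satisfying P'·P = I_k and S·S' = I_k. Define the WFA A = ⟨α, {A_σ}_{σ∈Σ}, ω⟩ by α = (row of P indexed by λ), ω = (column of S indexed by λ), and A_σ = P'·H_σ·S', where H_σ ∈ ℝ^{U×V} has entries (H_σ)_{u,v} = f(uσv). Then A computes f, i.e. αᵀ A_{x₁}⋯A_{xₙ} ω = f(x₁⋯xₙ) for every word x₁⋯xₙ ∈ Σ*. -/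
open Matrix

/-- (Spectral learning reconstruction.) Suppose `f : Σ* → ℝ` is computed by some WFA
with `k` states, and let `U, V` be finite sets of words both containing the empty word,
such that the Hankel block `H = (f (u ++ v))_{u ∈ U, v ∈ V}` has rank exactly `k`.
Given a rank factorization `H = P * S` with left/right inverses `P' * P = 1` and
`S * S' = 1`, the WFA with initial vector the `λ`-row of `P`, terminal vector the
`λ`-column of `S`, and transitions `A_σ = P' * H_σ * S'` (where `H_σ = (f (u ++ σ :: v))`)
computes `f`. -/
theorem spectral_learning_reconstruction
    {Γ : Type} [Fintype Γ] (f : List Γ → ℝ) (k : ℕ)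
    (hf : ∃ (α ω : Fin k → ℝ) (A : Γ → Matrix (Fin k) (Fin k) ℝ),
      ∀ x : List Γ, f x = α ⬝ᵥ ((x.map A).prod *ᵥ ω))
    (U V : Finset (List Γ)) (hU : ([] : List Γ) ∈ U) (hV : ([] : List Γ) ∈ V)
    (H : Matrix U V ℝ) (hH : ∀ (u : U) (v : V), H u v = f (u.1 ++ v.1))
    (hrank : H.rank = k)
    (P : Matrix U (Fin k) ℝ) (S : Matrix (Fin k) V ℝ) (hPS : H = P * S)
    (P' : Matrix (Fin k) U ℝ) (S' : Matrix V (Fin k) ℝ)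
    (hP' : P' * P = 1) (hS' : S * S' = 1)
    (Hσ : Γ → Matrix U V ℝ)
    (hHσ : ∀ (σ : Γ) (u : U) (v : V), Hσ σ u v = f (u.1 ++ σ :: v.1)) :
    ∀ x : List Γ,
      (fun i => P ⟨[], hU⟩ i) ⬝ᵥ
        (((x.map fun σ => P' * Hσ σ * S').prod) *ᵥ fun i => S i ⟨[], hV⟩) = f x := by
  obtain ⟨α, ω, A, hA⟩ := hf
  -- forward matrix `F` (rows `αᵀ A_u`) and backward matrix `B` (columns `A_v ω`)
  set F : Matrix U (Fin k) ℝ := Matrix.of (fun u j => (α ᵥ* (u.1.map A).prod) j) with hF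
  set B : Matrix (Fin k) V ℝ := Matrix.of (fun j v => ((v.1.map A).prod *ᵥ ω) j) with hB
  have key : ∀ (Q : Matrix (Fin k) (Fin k) ℝ) (u : U) (v : V),
      (F * Q * B) u v = α ⬝ᵥ (((u.1.map A).prod * Q * (v.1.map A).prod) *ᵥ ω) := by
    intro Q u v
    have h2 : (F * Q) u = α ᵥ* ((u.1.map A).prod * Q) := by
      funext j
      rw [← Matrix.vecMul_vecMul]
      rfl
    have h3 : (F * Q * B) u v = ((F * Q) u) ⬝ᵥ ((v.1.map A).prod *ᵥ ω) := by
      rw [Matrix.mul_apply]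
      rfl
    rw [h3, h2, Matrix.dotProduct_mulVec, Matrix.vecMul_vecMul,
      Matrix.dotProduct_mulVec, Matrix.mul_assoc]
  have hFB : F * B = H := by
    ext u v
    rw [hH, hA, List.map_append, List.prod_append]
    have := key 1 u v
    simpa using this
  have hHσF : ∀ σ : Γ, Hσ σ = F * A σ * B := by
    intro σ
    ext u v
    rw [hHσ, hA, key (A σ) u v, List.map_append, List.prod_append, List.map_cons,
      List.prod_cons, Matrix.mul_assoc]
  set M : Matrix (Fin k) (Fin k) ℝ := P' * F with hM
  set N : Matrix (Fin k) (Fin k) ℝ := B * S' with hN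
  have hMN : M * N = 1 := by
    rw [hM, hN, Matrix.mul_assoc P' F (B * S'), ← Matrix.mul_assoc F B S', hFB, hPS,
      Matrix.mul_assoc P (S) S', hS', Matrix.mul_one, hP']
  have hNM : N * M = 1 := mul_eq_one_comm.mp hMN
  have hFN : F * N = P := by
    rw [hN, ← Matrix.mul_assoc, hFB, hPS, Matrix.mul_assoc, hS', Matrix.mul_one]
  have hMB : M * B = S := by
    rw [hM, Matrix.mul_assoc, hFB, hPS, ← Matrix.mul_assoc, hP', Matrix.one_mul]
  have hPM : P * M = F := by
    rw [← hFN, Matrix.mul_assoc, hNM, Matrix.mul_one]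
  have hNS : N * S = B := by
    rw [← hMB, ← Matrix.mul_assoc, hNM, Matrix.one_mul]
  have hMAN : ∀ σ : Γ, P' * Hσ σ * S' = M * A σ * N := by
    intro σ
    rw [hHσF σ, ← Matrix.mul_assoc P' (F * A σ) B, ← Matrix.mul_assoc P' F (A σ),
      Matrix.mul_assoc (P' * F * A σ) B S', ← hM, ← hN]
  have hprod : ∀ x : List Γ,
      ((x.map fun σ => P' * Hσ σ * S').prod) = M * (x.map A).prod * N := by
    intro x
    induction x with
    | nil => simp [hMN]
    | cons σ t ih =>
      simp only [List.map_cons, List.prod_cons, ih, hMAN σ]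
      simp only [Matrix.mul_assoc]
      rw [← Matrix.mul_assoc N M, hNM, Matrix.one_mul]
  intro x
  rw [hprod x, hA]
  have hScol : (N *ᵥ fun i => S i ⟨[], hV⟩) = ω := by
    funext j
    have e1 : (N *ᵥ fun i => S i ⟨[], hV⟩) j = (N * S) j ⟨[], hV⟩ := by
      simp [Matrix.mulVec, Matrix.mul_apply, dotProduct]
    rw [e1, hNS, hB]
    simp
  have hProw : ((fun i => P ⟨[], hU⟩ i) ᵥ* M) = α := by
    funext j
    have e1 : ((fun i => P ⟨[], hU⟩ i) ᵥ* M) j = (P * M) ⟨[], hU⟩ j := by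
      simp [Matrix.vecMul, Matrix.mul_apply, dotProduct]
    rw [e1, hPM, hF]
    simp
  rw [← Matrix.mulVec_mulVec, hScol, ← Matrix.mulVec_mulVec, Matrix.dotProduct_mulVec, hProw]
end

section
/- (Theorem 2.) Let Σ be a finite alphabet and let B = ⟨β, {B_σ}_{σ∈Σ}, τ⟩ be a weighted finite automaton with k states computing g(h) = βᵀ B_h τ, where B_h = B_{h₁}⋯B_{hₙ} for h = h₁⋯hₙ. Let γ ≥ 0, set M = Σ_{σ∈Σ} B_σ, and suppose ‖γ·M‖ < 1 for a submultiplicative matrix norm making ℝ^{k×k} a Banach algebra (e.g. the L∞ operator norm). Then I − γ·M is invertible, and for every word h ∈ Σ*, the series Σ_{n=0}^∞ γⁿ · (Σ over words z ∈ Σ* of length n of βᵀ B_h B_z τ) converges, with sum equal to βᵀ B_h (I − γ·M)^{-1} τ. In particular, the WFA A = ⟨β, {B_σ}_{σ∈Σ}, (I − γ Σ_{σ∈Σ} B_σ)^{-1} τ⟩ computes the function Ṽ(h) = Σ_{z∈Σ*} γ^{|z|} g(hz). -/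
/-! Summing `B_z` over the words `z` of length `n` gives `Mⁿ`, so the `n`-th term of the series
is `βᵀ B_h (γ M)ⁿ τ`. The Neumann series `∑ (γ M)ⁿ` converges to `(1 - γ M)⁻¹` because
`‖γ M‖ < 1`, and `X ↦ βᵀ B_h X τ` is continuous and additive. -/

open Matrix

attribute [local instance] Matrix.linftyOpNormedRing
attribute [local instance] Matrix.linftyOpNormedSpace

theorem Fintype.sum_pow_eq_sum_prod_ofFn {Γ R : Type*} [Fintype Γ] [Semiring R] (f : Γ → R) :
    ∀ n : ℕ, (∑ σ, f σ) ^ n = ∑ z : Fin n → Γ, ((List.ofFn z).map f).prod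
  | 0 => by simp
  | n + 1 => by
    rw [Fintype.sum_equiv (Fin.consEquiv fun _ : Fin (n + 1) => Γ).symm
        (fun z => ((List.ofFn z).map f).prod)
        (fun p => f p.1 * ((List.ofFn p.2).map f).prod)
        (fun z => by simp only [List.ofFn_succ, List.map_cons, List.prod_cons]; rfl),
      Fintype.sum_prod_type, pow_succ', sum_pow_eq_sum_prod_ofFn f n, Finset.sum_mul]
    simp_rw [Finset.mul_sum]

theorem HasSum.dotProduct_mulVec {ι m n R : Type*} [Fintype m] [Fintype n] [Semiring R]
    [TopologicalSpace R] [IsTopologicalSemiring R] {f : ι → Matrix m n R} {A : Matrix m n R}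
    (hf : HasSum f A) (u : m → R) (v : n → R) :
    HasSum (fun i => u ⬝ᵥ f i *ᵥ v) (u ⬝ᵥ A *ᵥ v) :=
  hf.map
    ({ toFun := fun X => u ⬝ᵥ X *ᵥ v
       map_zero' := by simp
       map_add' := fun X Y => by simp only [add_mulVec, dotProduct_add] } : Matrix m n R →+ R)
    (continuous_const.dotProduct (continuous_id.matrix_mulVec continuous_const))

theorem Matrix.hasSum_geom_series_inv {n 𝕜 : Type*} [Fintype n] [DecidableEq n] [RCLike 𝕜]
    {A : Matrix n n 𝕜} (hA : ‖A‖ < 1) :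
    HasSum (fun i : ℕ => A ^ i) (1 - A)⁻¹ := by
  rw [nonsing_inv_eq_ringInverse]
  exact hasSum_geom_series_inverse A hA

theorem sum_dotProduct_prod_append_ofFn {Γ ι R : Type*} [Fintype Γ] [Fintype ι]
    [DecidableEq ι] [Semiring R] (β τ : ι → R) (B : Γ → Matrix ι ι R) (h : List Γ) (n : ℕ) :
    ∑ z : Fin n → Γ, β ⬝ᵥ (((h ++ List.ofFn z).map B).prod *ᵥ τ) =
      β ⬝ᵥ (((h.map B).prod * (∑ σ, B σ) ^ n) *ᵥ τ) := by
  simp only [List.map_append, List.prod_append, Fintype.sum_pow_eq_sum_prod_ofFn B n,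
    Finset.mul_sum, sum_mulVec, dotProduct_sum]

theorem wfa_computes_discounted_value_general
    {Γ : Type} [Fintype Γ] {k : ℕ}
    (β τ : Fin k → ℝ) (B : Γ → Matrix (Fin k) (Fin k) ℝ)
    (g : List Γ → ℝ)
    (hg : ∀ h : List Γ, g h = β ⬝ᵥ ((h.map B).prod *ᵥ τ))
    (γ : ℝ)
    (M : Matrix (Fin k) (Fin k) ℝ) (hM : M = ∑ σ, B σ)
    (hnorm : ‖γ • M‖ < 1) :
    IsUnit (1 - γ • M) ∧
      ∀ h : List Γ,
        HasSum (fun n : ℕ => γ ^ n * ∑ z : Fin n → Γ, g (h ++ List.ofFn z))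
          (β ⬝ᵥ (((h.map B).prod * (1 - γ • M)⁻¹) *ᵥ τ)) := by
  refine ⟨isUnit_one_sub_of_norm_lt_one hnorm, fun h => ?_⟩
  have hterm : ∀ n : ℕ, γ ^ n * ∑ z : Fin n → Γ, g (h ++ List.ofFn z) =
      β ⬝ᵥ (((h.map B).prod * (γ • M) ^ n) *ᵥ τ) := fun n => by
    simp only [hg, sum_dotProduct_prod_append_ofFn, hM, smul_pow, mul_smul_comm, smul_mulVec,
      dotProduct_smul, smul_eq_mul]
  simp_rw [hterm]
  exact ((hasSum_geom_series_inv hnorm).mul_left (h.map B).prod).dotProduct_mulVec β τ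

/-- (Theorem 2.) Let `B = ⟨β, {B_σ}, τ⟩` be a WFA computing `g(h) = βᵀ B_h τ`, let
`γ ≥ 0`, and let `M = ∑ σ, B σ` satisfy `‖γ • M‖ < 1` for the L∞ operator norm (which
makes `ℝ^{k×k}` a Banach algebra). Then `I - γ • M` is invertible, and for every word
`h`, the series `∑ₙ γⁿ · (∑_{|z| = n} g (h ++ z))` (words of length `n` identified with
functions `Fin n → Γ`) converges to `βᵀ B_h (I - γ • M)⁻¹ τ`; i.e. the WFA
`A = ⟨β, {B_σ}, (I - γ • M)⁻¹ τ⟩` computes `Ṽ(h) = ∑_{z ∈ Σ*} γ^{|z|} g (h z)`. -/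
theorem wfa_computes_discounted_value
    {Γ : Type} [Fintype Γ] {k : ℕ}
    (β τ : Fin k → ℝ) (B : Γ → Matrix (Fin k) (Fin k) ℝ)
    (g : List Γ → ℝ)
    (hg : ∀ h : List Γ, g h = β ⬝ᵥ ((h.map B).prod *ᵥ τ))
    (γ : ℝ) (hγ : 0 ≤ γ)
    (M : Matrix (Fin k) (Fin k) ℝ) (hM : M = ∑ σ, B σ)
    (hnorm : ‖γ • M‖ < 1) :
    IsUnit (1 - γ • M) ∧
      ∀ h : List Γ,
        HasSum (fun n : ℕ => γ ^ n * ∑ z : Fin n → Γ, g (h ++ List.ofFn z))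
          (β ⬝ᵥ (((h.map B).prod * (1 - γ • M)⁻¹) *ᵥ τ)) :=
  wfa_computes_discounted_value_general β τ B g hg γ M hM hnorm
end
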